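/- arXiv:2508.08092 — 2 statements merged into one kernel-verified Lean document; each statement's English description precedes it below -/
import Mathlib

section
/- For jointly distributed discrete random variables (A, B) for the 'past' and (A', B') for the 'future', the identity I((A,B);(A',B')) = I(A;A') + I((A,B); B' | A') + I(A'; B | A) holds. -/
open Real BigOperators

/-- Probability that the random variable `X` takes the value `x`,
under the weight function `μ` on a finite sample space `Ω`. -/
noncomputable def pr {Ω α : Type*} [Fintype Ω] [DecidableEq α]
    (μ : Ω → ℝ) (X : Ω → α) (x : α) : ℝ :=
  ∑ ω, if X ω = x then μ ω else 0

/-- Shannon entropy of the random variable `X`. -/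
noncomputable def ent {Ω α : Type*} [Fintype Ω] [Fintype α] [DecidableEq α]
    (μ : Ω → ℝ) (X : Ω → α) : ℝ :=
  ∑ x, Real.negMulLog (pr μ X x)

/-- Mutual information `I(X;Y) = H(X) + H(Y) - H(X,Y)`. -/
noncomputable def mi {Ω α β : Type*} [Fintype Ω]
    [Fintype α] [Fintype β] [DecidableEq α] [DecidableEq β]
    (μ : Ω → ℝ) (X : Ω → α) (Y : Ω → β) : ℝ :=
  ent μ X + ent μ Y - ent μ (fun ω => (X ω, Y ω))

/-- Conditional mutual information `I(X;Z|W) = H(X,W) + H(Z,W) - H(X,Z,W) - H(W)`. -/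
noncomputable def condMI {Ω α β γ : Type*} [Fintype Ω]
    [Fintype α] [Fintype β] [Fintype γ]
    [DecidableEq α] [DecidableEq β] [DecidableEq γ]
    (μ : Ω → ℝ) (X : Ω → α) (Z : Ω → β) (W : Ω → γ) : ℝ :=
  ent μ (fun ω => (X ω, W ω)) + ent μ (fun ω => (Z ω, W ω))
    - ent μ (fun ω => (X ω, Z ω, W ω)) - ent μ W

/-!
Expanded into joint entropies, both sides are the same linear combination once the entropy of
a tuple is identified with that of any reordering of it; this holds because entropy only sees
the multiset of probabilities, which a bijective relabelling of the values does not change.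
-/

lemma ent_comp_equiv {Ω α β : Type*} [Fintype Ω] [Fintype α] [Fintype β]
    [DecidableEq α] [DecidableEq β] (μ : Ω → ℝ) (X : Ω → α) (e : α ≃ β) :
    ent μ (fun ω => e (X ω)) = ent μ X := by
  refine (Fintype.sum_equiv e _ _ fun x => ?_).symm
  unfold pr
  simp only [e.apply_eq_iff_eq]

lemma ent_prod_comm {Ω α β : Type*} [Fintype Ω] [Fintype α] [Fintype β]
    [DecidableEq α] [DecidableEq β] (μ : Ω → ℝ) (X : Ω → α) (Y : Ω → β) :
    ent μ (fun ω => (Y ω, X ω)) = ent μ (fun ω => (X ω, Y ω)) :=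
  ent_comp_equiv μ (fun ω => (X ω, Y ω)) (Equiv.prodComm α β)

theorem joint_excess_entropy_decomposition_general
    {Ω α β α' β' : Type*} [Fintype Ω]
    [Fintype α] [Fintype β] [Fintype α'] [Fintype β']
    [DecidableEq α] [DecidableEq β] [DecidableEq α'] [DecidableEq β']
    (μ : Ω → ℝ)
    (A : Ω → α) (B : Ω → β) (A' : Ω → α') (B' : Ω → β') :
    mi μ (fun ω => (A ω, B ω)) (fun ω => (A' ω, B' ω))
      = mi μ A A' + condMI μ (fun ω => (A ω, B ω)) B' A' + condMI μ A' B A := by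
  have h_past_future : ent μ (fun ω => ((A ω, B ω), B' ω, A' ω))
      = ent μ (fun ω => ((A ω, B ω), A' ω, B' ω)) :=
    ent_comp_equiv μ (fun ω => ((A ω, B ω), A' ω, B' ω))
      ((Equiv.refl _).prodCongr (Equiv.prodComm α' β'))
  have h_past_input : ent μ (fun ω => (A' ω, B ω, A ω))
      = ent μ (fun ω => ((A ω, B ω), A' ω)) :=
    ent_comp_equiv μ (fun ω => ((A ω, B ω), A' ω))
      ((Equiv.prodComm (α × β) α').trans ((Equiv.refl α').prodCongr (Equiv.prodComm α β)))
  unfold mi condMI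
  rw [ent_prod_comm μ A' B', ent_prod_comm μ A A', ent_prod_comm μ A B,
    h_past_future, h_past_input]
  ring

/-- Decomposition of the joint excess entropy:
`I((A,B);(A',B')) = I(A;A') + I((A,B); B' | A') + I(A'; B | A)`. -/
theorem joint_excess_entropy_decomposition
    {Ω α β α' β' : Type*} [Fintype Ω]
    [Fintype α] [Fintype β] [Fintype α'] [Fintype β']
    [DecidableEq α] [DecidableEq β] [DecidableEq α'] [DecidableEq β']
    (μ : Ω → ℝ) (hμ : ∀ ω, 0 ≤ μ ω) (hsum : ∑ ω, μ ω = 1)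
    (A : Ω → α) (B : Ω → β) (A' : Ω → α') (B' : Ω → β') :
    mi μ (fun ω => (A ω, B ω)) (fun ω => (A' ω, B' ω))
      = mi μ A A' + condMI μ (fun ω => (A ω, B ω)) B' A' + condMI μ A' B A :=
  joint_excess_entropy_decomposition_general μ A B A' B'
end

section
/- Define S(c) = -∑ᵢ eᵢ(c) log eᵢ(c) where e₁ = 1-π_f-π_e and e₂,₃(c) = (π_f+π_e ± k(c))/2 with k(c) = √((π_f-π_e)² + 4c²π_f π_e), for fixed π_f, π_e > 0 with π_f+π_e < 1 and c ∈ (0,1). Then dS/dc = -(2c·π_f·π_e/k(c))·log((π_f+π_e+k(c))/(π_f+π_e-k(c))) < 0; in particular S is strictly decreasing in c. -/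
open Real

/-- `k(c) = √((π_f - π_e)² + 4c²π_f π_e)`. -/
noncomputable def kfun (πf πe c : ℝ) : ℝ :=
  Real.sqrt ((πf - πe) ^ 2 + 4 * c ^ 2 * πf * πe)

/-- `S(c) = -∑ᵢ eᵢ(c) log eᵢ(c)` with eigenvalues `e₁ = 1 - π_f - π_e` and
`e₂,₃(c) = (π_f + π_e ± k(c))/2`. -/
noncomputable def Sfun (πf πe c : ℝ) : ℝ :=
  Real.negMulLog (1 - πf - πe)
    + Real.negMulLog ((πf + πe + kfun πf πe c) / 2)
    + Real.negMulLog ((πf + πe - kfun πf πe c) / 2)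

/-- For fixed `π_f, π_e > 0` with `π_f + π_e < 1` and `c ∈ (0,1)`, the entropy `S`
has derivative `dS/dc = -(2c·π_f·π_e/k(c))·log((π_f+π_e+k(c))/(π_f+π_e-k(c))) < 0`;
in particular `S` is strictly decreasing in `c` on `(0,1)`. -/
theorem Sfun_deriv_neg_strictAnti
    (πf πe : ℝ) (hf : 0 < πf) (he : 0 < πe) (hlt : πf + πe < 1) :
    (∀ c ∈ Set.Ioo (0 : ℝ) 1,
      HasDerivAt (Sfun πf πe)
        (-(2 * c * πf * πe / kfun πf πe c)
          * Real.log ((πf + πe + kfun πf πe c) / (πf + πe - kfun πf πe c))) c ∧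
      -(2 * c * πf * πe / kfun πf πe c)
          * Real.log ((πf + πe + kfun πf πe c) / (πf + πe - kfun πf πe c)) < 0) ∧
    StrictAntiOn (Sfun πf πe) (Set.Ioo 0 1) := by
  have key : ∀ c ∈ Set.Ioo (0 : ℝ) 1,
      HasDerivAt (Sfun πf πe)
        (-(2 * c * πf * πe / kfun πf πe c)
          * Real.log ((πf + πe + kfun πf πe c) / (πf + πe - kfun πf πe c))) c ∧
      -(2 * c * πf * πe / kfun πf πe c)
          * Real.log ((πf + πe + kfun πf πe c) / (πf + πe - kfun πf πe c)) < 0 := by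
    intro c hc
    obtain ⟨hc0, hc1⟩ := hc
    set k := kfun πf πe c with hkdef
    have hq0 : 0 < (πf - πe) ^ 2 + 4 * c ^ 2 * πf * πe := by positivity
    have hk0 : 0 < k := Real.sqrt_pos.mpr hq0
    have hk2 : k ^ 2 = (πf - πe) ^ 2 + 4 * c ^ 2 * πf * πe := Real.sq_sqrt hq0.le
    have hks : k < πf + πe := by
      have hc2 : c ^ 2 < 1 := by nlinarith
      have hsq : k ^ 2 < (πf + πe) ^ 2 := by nlinarith [mul_pos hf he]
      nlinarith
    have hsk0 : 0 < πf + πe + k := by linarith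
    have hsk0' : 0 < πf + πe - k := by linarith
    -- derivative of the inner polynomial
    have h1 : HasDerivAt (fun x : ℝ => x ^ 2) (2 * c) c := by
      simpa using hasDerivAt_pow 2 c
    have h_inner : HasDerivAt (fun x : ℝ => (πf - πe) ^ 2 + 4 * x ^ 2 * πf * πe)
        (8 * c * πf * πe) c := by
      have h4 := (((h1.const_mul 4).mul_const πf).mul_const πe).const_add ((πf - πe) ^ 2)
      exact h4.congr_deriv (by ring)
    have hkder : HasDerivAt (kfun πf πe) (8 * c * πf * πe / (2 * k)) c := by
      exact h_inner.sqrt (ne_of_gt hq0)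
    -- derivatives of the two eigenvalue arguments
    have h2a : HasDerivAt (fun x => (πf + πe + kfun πf πe x) / 2)
        ((8 * c * πf * πe / (2 * k)) / 2) c := (hkder.const_add (πf + πe)).div_const 2
    have h3a : HasDerivAt (fun x => (πf + πe - kfun πf πe x) / 2)
        ((-(8 * c * πf * πe / (2 * k))) / 2) c := (hkder.const_sub (πf + πe)).div_const 2
    have h2 := (Real.hasDerivAt_negMulLog (x := (πf + πe + k) / 2) (by positivity)).comp c h2a
    have h3 := (Real.hasDerivAt_negMulLog (x := (πf + πe - k) / 2) (by positivity)).comp c h3a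
    have hS : HasDerivAt (Sfun πf πe)
        ((-Real.log ((πf + πe + k) / 2) - 1) * ((8 * c * πf * πe / (2 * k)) / 2)
          + (-Real.log ((πf + πe - k) / 2) - 1) * ((-(8 * c * πf * πe / (2 * k))) / 2)) c := by
      have := (h2.const_add (Real.negMulLog (1 - πf - πe))).add h3
      exact this
    have hlogeq : -(2 * c * πf * πe / k)
          * Real.log ((πf + πe + k) / (πf + πe - k))
        = (-Real.log ((πf + πe + k) / 2) - 1) * ((8 * c * πf * πe / (2 * k)) / 2)
          + (-Real.log ((πf + πe - k) / 2) - 1) * ((-(8 * c * πf * πe / (2 * k))) / 2) := by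
      rw [Real.log_div (ne_of_gt hsk0) (ne_of_gt hsk0'),
        Real.log_div (ne_of_gt hsk0) (by norm_num),
        Real.log_div (ne_of_gt hsk0') (by norm_num)]
      field_simp
      ring
    constructor
    · rw [hlogeq]; exact hS
    · 
      have hpos : 0 < 2 * c * πf * πe / k := by positivity
      have hlog : 0 < Real.log ((πf + πe + k) / (πf + πe - k)) :=
        Real.log_pos ((one_lt_div hsk0').mpr (by linarith))
      have := mul_pos hpos hlog
      nlinarith
  refine ⟨key, ?_⟩
  have hcont : ContinuousOn (Sfun πf πe) (Set.Ioo 0 1) := fun x hx =>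
    ((key x hx).1.continuousAt).continuousWithinAt
  refine strictAntiOn_of_deriv_neg (convex_Ioo 0 1) hcont ?_
  intro x hx
  rw [interior_Ioo] at hx
  rw [(key x hx).1.deriv]
  exact (key x hx).2
end
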